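/- arXiv:1608.00461 — 2 statements merged into one kernel-verified Lean document; each statement's English description precedes it below -/
import Mathlib

section
/- Let Λ be a locally finite connected graph and F a finite set of vertices and edges of Λ. Then the set of closed subgroups H of Aut(Λ) such that F meets every H-orbit of vertices and every H-orbit of edges is clopen in the Chabauty space of closed subgroups of Aut(Λ). -/
open SimpleGraph

/-- The permutation topology (topology of pointwise convergence on vertices, the vertex
set being discrete) on the automorphism group of a graph. -/
instance graphAutTopology {V : Type*} {G : SimpleGraph V} : TopologicalSpace (G ≃g G) :=
  TopologicalSpace.induced (fun g : G ≃g G => (g : V → V))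
    (@Pi.topologicalSpace V (fun _ => V) (fun _ => ⊥))

/-- The `k`-closure of a group `J` of automorphisms of a graph `G`: all automorphisms
agreeing with some element of `J` on every ball of radius `k`. -/
def kClosure {V : Type*} (G : SimpleGraph V) (J : Subgroup (G ≃g G)) (k : ℕ) :
    Set (G ≃g G) :=
  {g | ∀ v : V, ∃ h ∈ J, ∀ x : V, G.dist v x ≤ k → g x = h x}

/-- The pointwise stabilizer, in a subgroup `H` of the automorphism group of a graph `G`,
of the ball of radius `r` around the vertex `v` (denoted `H_v^{[r]}` in the paper). -/
def ballStab {V : Type*} (G : SimpleGraph V) (H : Subgroup (G ≃g G)) (v : V) (r : ℕ) :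
    Subgroup (G ≃g G) where
  carrier := {g | g ∈ H ∧ ∀ x : V, G.dist v x ≤ r → g x = x}
  one_mem' := ⟨H.one_mem, fun x _ => rfl⟩
  mul_mem' := by
    rintro a b ⟨ha, ha'⟩ ⟨hb, hb'⟩
    refine ⟨H.mul_mem ha hb, fun x hx => ?_⟩
    rw [RelIso.mul_apply, hb' x hx, ha' x hx]
  inv_mem' := by
    rintro a ⟨ha, ha'⟩
    refine ⟨H.inv_mem ha, fun x hx => ?_⟩
    conv_lhs => rw [← ha' x hx]
    exact a.inv_apply_self x

/-- A subgroup of the automorphism group of a graph acts cocompactly (with finitely many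
orbits of vertices). -/
def CocompactOn {V : Type*} (G : SimpleGraph V) (H : Subgroup (G ≃g G)) : Prop :=
  ∃ s : Finset V, ∀ v : V, ∃ h ∈ H, h v ∈ s

/-- The space of closed subgroups of a topological group `G`. -/
def ChabautySpace (G : Type*) [Group G] [TopologicalSpace G] : Type _ :=
  {H : Subgroup G // IsClosed (H : Set G)}

/-- The Chabauty (Fell) topology on the space of closed subgroups of `G`. -/
def chabautyTopology (G : Type*) [Group G] [TopologicalSpace G] :
    TopologicalSpace (ChabautySpace G) :=
  TopologicalSpace.generateFrom
    ({S | ∃ K : Set G, IsCompact K ∧ S = {H : ChabautySpace G | ((H.1 : Set G) ∩ K) = ∅}} ∪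
      {S | ∃ U : Set G, IsOpen U ∧ S = {H : ChabautySpace G | ((H.1 : Set G) ∩ U).Nonempty}})


section AuxLemmas
variable {V : Type*} {G : SimpleGraph V}

private lemma walk_decomp {u v : V} (p : G.Walk u v) {d : ℕ} (h : p.length = d + 1) :
    ∃ z, G.Adj u z ∧ ∃ q : G.Walk z v, q.length = d := by
  cases p with
  | nil => simp at h
  | cons ha q => exact ⟨_, ha, q, by simpa using h⟩

private lemma exists_adj_dist_le (hconn : G.Connected) {a v : V} {d : ℕ}
    (h : G.dist a v = d + 1) : ∃ z, G.Adj z v ∧ G.dist a z ≤ d := by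
  obtain ⟨p, hp⟩ := hconn.exists_walk_length_eq_dist v a
  rw [SimpleGraph.dist_comm, h] at hp
  obtain ⟨z, hadj, q, hq⟩ := walk_decomp p hp
  exact ⟨z, hadj.symm, by rw [SimpleGraph.dist_comm]; exact hq ▸ SimpleGraph.dist_le q⟩

private lemma finite_ball (hlf : ∀ v : V, (G.neighborSet v).Finite) (hconn : G.Connected)
    (a : V) : ∀ d : ℕ, {y : V | G.dist a y ≤ d}.Finite := by
  intro d
  induction d with
  | zero =>
    apply Set.Finite.subset (Set.finite_singleton a)
    intro y hy
    simp only [Set.mem_setOf_eq, Nat.le_zero] at hy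
    simp [((hconn a y).dist_eq_zero_iff.mp hy)]
  | succ d ih =>
    apply Set.Finite.subset (ih.union (ih.biUnion (fun z _ => hlf z)))
    intro y hy
    simp only [Set.mem_setOf_eq] at hy
    rcases Nat.lt_or_ge (G.dist a y) (d + 1) with h | h
    · exact Or.inl (Nat.lt_succ_iff.mp h)
    · have heq : G.dist a y = d + 1 := le_antisymm hy h
      obtain ⟨z, hadj, hz⟩ := exists_adj_dist_le hconn heq
      exact Or.inr (Set.mem_biUnion hz hadj)

private lemma iso_dist (hconn : G.Connected) (g : G ≃g G) (u v : V) :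
    G.dist (g u) (g v) = G.dist u v := by
  have key : ∀ (g : G ≃g G) (u v : V), G.dist (g u) (g v) ≤ G.dist u v := by
    intro g u v
    obtain ⟨p, hp⟩ := hconn.exists_walk_length_eq_dist u v
    calc G.dist (g u) (g v) ≤ (p.map g.toHom).length := SimpleGraph.dist_le _
    _ = G.dist u v := by rw [SimpleGraph.Walk.length_map, hp]
  refine le_antisymm (key g u v) ?_
  have h2 := key g⁻¹ (g u) (g v)
  rw [show (g⁻¹ : G ≃g G) (g u) = u from g.inv_apply_self u,
    show (g⁻¹ : G ≃g G) (g v) = v from g.inv_apply_self v] at h2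
  exact h2

private lemma isOpen_pairCond (a b : V) (P : V → V → Prop) :
    IsOpen {g : G ≃g G | P (g a) (g b)} := by
  letI : TopologicalSpace V := ⊥
  haveI : DiscreteTopology V := ⟨rfl⟩
  have hcont : Continuous (fun g : G ≃g G => (g : V → V)) := continuous_induced_dom
  have heq : {g : G ≃g G | P (g a) (g b)} =
      ⋃ p : V × V, ⋃ (_ : P p.1 p.2),
        ((fun g : G ≃g G => (g : V → V) a) ⁻¹' {p.1} ∩
          (fun g : G ≃g G => (g : V → V) b) ⁻¹' {p.2}) := by
    ext g
    simp only [Set.mem_setOf_eq, Set.mem_iUnion, Set.mem_inter_iff, Set.mem_preimage,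
      Set.mem_singleton_iff]
    constructor
    · intro h; exact ⟨(g a, g b), h, rfl, rfl⟩
    · rintro ⟨p, hp, h1, h2⟩; rw [h1, h2]; exact hp
  rw [heq]
  refine isOpen_iUnion fun p => isOpen_iUnion fun _ => IsOpen.inter ?_ ?_
  · exact ((continuous_apply a).comp hcont).isOpen_preimage _ (isOpen_discrete _)
  · exact ((continuous_apply b).comp hcont).isOpen_preimage _ (isOpen_discrete _)

private lemma isClopen_pairCond (a b : V) (P : V → V → Prop) :
    IsClopen {g : G ≃g G | P (g a) (g b)} := by
  refine ⟨?_, isOpen_pairCond a b P⟩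
  rw [← isOpen_compl_iff]
  have hc : {g : G ≃g G | P (g a) (g b)}ᶜ = {g : G ≃g G | ¬ P (g a) (g b)} := rfl
  rw [hc]
  exact isOpen_pairCond a b (fun c d => ¬ P c d)

private lemma isClopen_applyCond (a : V) (P : V → Prop) :
    IsClopen {g : G ≃g G | P (g a)} :=
  isClopen_pairCond a a (fun c _ => P c)

private lemma isCompact_applyMem (hlf : ∀ v : V, (G.neighborSet v).Finite)
    (hconn : G.Connected) (a : V) (W : Set V) (hW : W.Finite) :
    IsCompact {g : G ≃g G | g a ∈ W} := by
  haveI := Classical.decEq V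
  letI : TopologicalSpace V := ⊥
  haveI : DiscreteTopology V := ⟨rfl⟩
  have hind : Topology.IsInducing (fun g : G ≃g G => (g : V → V)) := ⟨rfl⟩
  rw [hind.isCompact_iff]
  have hcpt : IsCompact (Set.pi Set.univ fun x => ⋃ w ∈ W, {y : V | G.dist w y ≤ G.dist a x}) :=
    isCompact_univ_pi fun x =>
      ((hW.biUnion fun w _ => finite_ball hlf hconn w (G.dist a x)).isCompact)
  refine hcpt.of_isClosed_subset ?_ ?_
  · refine isClosed_of_closure_subset ?_
    intro f hf
    have approx : ∀ t : Finset V, ∃ g : G ≃g G, g a ∈ W ∧ ∀ x ∈ t, (g : V → V) x = f x := by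
      intro t
      have hUo : IsOpen {h : V → V | ∀ x ∈ t, h x = f x} := by
        have he : {h : V → V | ∀ x ∈ t, h x = f x} =
            ⋂ x ∈ t, (fun h : V → V => h x) ⁻¹' {f x} := by
          ext h; simp
        rw [he]
        exact isOpen_biInter_finset fun x _ =>
          (continuous_apply x).isOpen_preimage _ (isOpen_discrete _)
      obtain ⟨u, huo, g, hg, rfl⟩ := mem_closure_iff.mp hf _ hUo (fun x _ => rfl)
      exact ⟨g, hg, huo⟩
    have hfa : f a ∈ W := by
      obtain ⟨g, hg, he⟩ := approx {a}
      rw [← he a (Finset.mem_singleton_self a)]; exact hg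
    have hinj : Function.Injective f := by
      intro x y hxy
      obtain ⟨g, -, he⟩ := approx {x, y}
      apply g.injective
      rw [show (g : V → V) x = f x from he x (by simp),
        show (g : V → V) y = f y from he y (by simp), hxy]
    have hadj : ∀ x y : V, G.Adj (f x) (f y) ↔ G.Adj x y := by
      intro x y
      obtain ⟨g, -, he⟩ := approx {x, y}
      rw [← he x (by simp), ← he y (by simp)]
      exact g.map_adj_iff
    have hsurj : Function.Surjective f := by
      intro w
      obtain ⟨g, -, he⟩ :=
        approx (insert a (finite_ball hlf hconn a (G.dist (f a) w)).toFinset)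
      have hga : (g : V → V) a = f a := he a (Finset.mem_insert_self _ _)
      obtain ⟨x, hx⟩ := g.surjective w
      have hdx : G.dist a x ≤ G.dist (f a) w := by
        have h3 := iso_dist hconn g a x
        rw [hx, hga] at h3
        exact h3.symm.le
      refine ⟨x, ?_⟩
      rw [← he x (by simp [Set.Finite.mem_toFinset, hdx]), hx]
    refine ⟨⟨Equiv.ofBijective f ⟨hinj, hsurj⟩, fun {x y} => hadj x y⟩, hfa, rfl⟩
  · rintro _ ⟨g, hg, rfl⟩ x _
    exact Set.mem_biUnion hg (by simp [iso_dist hconn g a x])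

private lemma vertex_cover (hconn : G.Connected) (Fv : Finset V)
    (H : Subgroup (G ≃g G)) {u₀ : V} (hu₀ : u₀ ∈ Fv)
    (hcov : ∀ x : V, x ∈ (↑Fv : Set V) ∪ ⋃ v ∈ Fv, G.neighborSet v → ∃ h ∈ H, h x ∈ Fv) :
    ∀ v : V, ∃ h ∈ H, h v ∈ Fv := by
  have main : ∀ n : ℕ, ∀ v : V, G.dist u₀ v ≤ n → ∃ h ∈ H, h v ∈ Fv := by
    intro n
    induction n with
    | zero =>
      intro v hv
      have h0 : u₀ = v := (hconn u₀ v).dist_eq_zero_iff.mp (Nat.le_zero.mp hv)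
      exact ⟨1, H.one_mem, h0 ▸ hu₀⟩
    | succ n ih =>
      intro v hv
      rcases Nat.lt_or_ge (G.dist u₀ v) (n + 1) with h | h
      · exact ih v (Nat.lt_succ_iff.mp h)
      · obtain ⟨z, hadj, hz⟩ := exists_adj_dist_le hconn (le_antisymm hv h)
        obtain ⟨h1, hh1, hh1F⟩ := ih z hz
        have hmem : (h1 v : V) ∈ (↑Fv : Set V) ∪ ⋃ w ∈ Fv, G.neighborSet w :=
          Or.inr (Set.mem_biUnion hh1F (h1.map_adj_iff.mpr hadj))
        obtain ⟨h2, hh2, hh2F⟩ := hcov _ hmem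
        refine ⟨h2 * h1, H.mul_mem hh2 hh1, ?_⟩
        rw [RelIso.mul_apply]; exact hh2F
  intro v; exact main (G.dist u₀ v) v le_rfl

private lemma isClopen_mapCond (Fe : Finset (Sym2 V)) (e : Sym2 V) :
    IsClopen {g : G ≃g G | Sym2.map (g : V → V) e ∈ Fe} := by
  induction e using Sym2.ind with
  | _ a b =>
    have heq : {g : G ≃g G | Sym2.map (g : V → V) s(a, b) ∈ Fe} =
        {g : G ≃g G | s((g : V → V) a, (g : V → V) b) ∈ Fe} := by
      ext g; simp [Sym2.map_pair_eq]
    rw [heq]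
    exact isClopen_pairCond a b (fun c d => s(c, d) ∈ Fe)

private lemma isCompact_mapCond (hlf : ∀ v : V, (G.neighborSet v).Finite)
    (hconn : G.Connected) (Fe : Finset (Sym2 V)) (e : Sym2 V) :
    IsCompact {g : G ≃g G | Sym2.map (g : V → V) e ∈ Fe} := by
  induction e using Sym2.ind with
  | _ a b =>
    set W : Set V := {v | ∃ e' ∈ Fe, v ∈ e'} with hWdef
    have hWfin : W.Finite := by
      have hsub : W ⊆ ⋃ e' ∈ (Fe : Finset (Sym2 V)), {v : V | v ∈ e'} := by
        rintro v ⟨e', he', hv⟩; exact Set.mem_biUnion he' hv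
      refine Set.Finite.subset (Set.Finite.biUnion Fe.finite_toSet ?_) hsub
      intro e' _
      induction e' using Sym2.ind with
      | _ c d =>
        refine Set.Finite.subset ((Set.finite_singleton d).insert c) ?_
        intro v hv
        simpa [Sym2.mem_iff] using hv
    refine (isCompact_applyMem hlf hconn a W hWfin).of_isClosed_subset
      (isClopen_mapCond Fe s(a, b)).1 ?_
    intro g hg
    exact ⟨Sym2.map (g : V → V) s(a, b), hg, by
      rw [Sym2.map_pair_eq]; exact Sym2.mem_iff.mpr (Or.inl rfl)⟩

end AuxLemmas

/-- Let `Λ` be a locally finite connected graph and `F` a finite set of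
vertices and edges of `Λ`.  Then the set of closed subgroups `H` of `Aut(Λ)` such that
`F` meets every `H`-orbit of vertices and every `H`-orbit of edges is clopen in the
Chabauty space of closed subgroups of `Aut(Λ)`. -/
theorem stmt_17 {V : Type*} (G : SimpleGraph V)
    (hlf : ∀ v : V, (G.neighborSet v).Finite) (hconn : G.Connected)
    (Fv : Finset V) (Fe : Finset (Sym2 V)) (hFe : ↑Fe ⊆ G.edgeSet) :
    @IsClopen _ (chabautyTopology (G ≃g G))
      {H : ChabautySpace (G ≃g G) |
        (∀ v : V, ∃ h ∈ H.1, h v ∈ Fv) ∧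
        ∀ e ∈ G.edgeSet, ∃ h ∈ H.1, Sym2.map (h : V → V) e ∈ Fe} := by
  letI tC : TopologicalSpace (ChabautySpace (G ≃g G)) := chabautyTopology (G ≃g G)
  show IsClopen _
  have key : ∀ K : Set (G ≃g G), IsOpen K → IsCompact K →
      IsClopen {H : ChabautySpace (G ≃g G) | ((H.1 : Set (G ≃g G)) ∩ K).Nonempty} := by
    intro K hKo hKc
    constructor
    · rw [← isOpen_compl_iff]
      have hc : {H : ChabautySpace (G ≃g G) | ((H.1 : Set (G ≃g G)) ∩ K).Nonempty}ᶜ =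
          {H : ChabautySpace (G ≃g G) | ((H.1 : Set (G ≃g G)) ∩ K) = ∅} := by
        ext H; simp [Set.not_nonempty_iff_eq_empty]
      rw [hc]
      exact TopologicalSpace.GenerateOpen.basic _ (Or.inl ⟨K, hKc, rfl⟩)
    · exact TopologicalSpace.GenerateOpen.basic _ (Or.inr ⟨K, hKo, rfl⟩)
  rcases Finset.eq_empty_or_nonempty Fv with hFv | ⟨u₀, hu₀⟩
  · have hempty : {H : ChabautySpace (G ≃g G) |
        (∀ v : V, ∃ h ∈ H.1, h v ∈ Fv) ∧
        ∀ e ∈ G.edgeSet, ∃ h ∈ H.1, Sym2.map (h : V → V) e ∈ Fe} = ∅ := by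
      rw [Set.eq_empty_iff_forall_notMem]
      rintro H ⟨h1, -⟩
      obtain ⟨v⟩ := hconn.nonempty
      obtain ⟨h, -, hmem⟩ := h1 v
      rw [hFv] at hmem
      exact Finset.notMem_empty _ hmem
    rw [hempty]
    exact isClopen_empty
  · set T : Set V := ↑Fv ∪ ⋃ v ∈ Fv, G.neighborSet v with hTdef
    have hTfin : T.Finite := Fv.finite_toSet.union (Fv.finite_toSet.biUnion fun v _ => hlf v)
    set Te : Set (Sym2 V) := {e | e ∈ G.edgeSet ∧ ∃ v ∈ Fv, v ∈ e} with hTedef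
    have hTefin : Te.Finite := by
      refine Set.Finite.subset (Set.Finite.biUnion Fv.finite_toSet
        (fun v _ => ((hlf v).image (fun w => s(v, w))))) ?_
      rintro e ⟨he, v, hv, hve⟩
      obtain ⟨y, rfl⟩ := Sym2.mem_iff_exists.mp hve
      exact Set.mem_biUnion hv ⟨y, (G.mem_edgeSet).mp he, rfl⟩
    have hmain : {H : ChabautySpace (G ≃g G) |
        (∀ v : V, ∃ h ∈ H.1, h v ∈ Fv) ∧
        ∀ e ∈ G.edgeSet, ∃ h ∈ H.1, Sym2.map (h : V → V) e ∈ Fe} =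
        (⋂ x ∈ T, {H : ChabautySpace (G ≃g G) |
          ((H.1 : Set (G ≃g G)) ∩ {g : G ≃g G | g x ∈ Fv}).Nonempty}) ∩
        (⋂ e ∈ Te, {H : ChabautySpace (G ≃g G) |
          ((H.1 : Set (G ≃g G)) ∩
            {g : G ≃g G | Sym2.map (g : V → V) e ∈ Fe}).Nonempty}) := by
      ext H
      constructor
      · rintro ⟨h1, h2⟩
        constructor
        · refine Set.mem_iInter₂.mpr fun x _ => ?_
          obtain ⟨h, hh, hF⟩ := h1 x
          exact ⟨h, hh, hF⟩
        · refine Set.mem_iInter₂.mpr fun e he => ?_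
          obtain ⟨h, hh, hF⟩ := h2 e he.1
          exact ⟨h, hh, hF⟩
      · rintro ⟨hA, hB⟩
        have hA' : ∀ x : V, x ∈ T → ∃ h ∈ H.1, h x ∈ Fv := by
          intro x hx
          obtain ⟨h, hh, hF⟩ := Set.mem_iInter₂.mp hA x hx
          exact ⟨h, hh, hF⟩
        have hv : ∀ v : V, ∃ h ∈ H.1, h v ∈ Fv := vertex_cover hconn Fv H.1 hu₀ hA'
        refine ⟨hv, ?_⟩
        intro e he
        induction e using Sym2.ind with
        | _ a b =>
          rw [SimpleGraph.mem_edgeSet] at he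
          obtain ⟨h, hh, hha⟩ := hv a
          have hemem : Sym2.map (h : V → V) s(a, b) ∈ Te := by
            refine ⟨?_, h a, hha, ?_⟩
            · rw [Sym2.map_pair_eq, SimpleGraph.mem_edgeSet]
              exact h.map_adj_iff.mpr he
            · rw [Sym2.map_pair_eq]
              exact Sym2.mem_iff.mpr (Or.inl rfl)
          obtain ⟨h', hh', hh'e⟩ := Set.mem_iInter₂.mp hB _ hemem
          refine ⟨h' * h, H.1.mul_mem hh' hh, ?_⟩
          have hcomp : (((h' * h : G ≃g G)) : V → V) = (h' : V → V) ∘ (h : V → V) :=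
            funext fun x => RelIso.mul_apply h' h x
          rw [hcomp, ← Sym2.map_map]
          exact hh'e
    rw [hmain]
    refine IsClopen.inter (hTfin.isClopen_biInter fun x _ => key _ ?_ ?_)
      (hTefin.isClopen_biInter fun e _ => key _ ?_ ?_)
    · exact (isClopen_applyCond x (fun c => c ∈ Fv)).2
    · exact isCompact_applyMem hlf hconn x ↑Fv Fv.finite_toSet
    · exact (isClopen_mapCond Fe e).2
    · exact isCompact_mapCond hlf hconn Fe e
end

section
/- Let T be a locally finite tree, k ≥ 0, and G a closed subgroup of Aut(T) such that G equals its k-closure, G acts cocompactly on T, is non-discrete, preserves no proper nonempty subtree, and fixes no end of T. Let G^{+_k} be the subgroup generated by pointwise stabilizers of balls of radius k−1 around edges of T. Then G^{+_k} is an open normal subgroup of G, the quotient graph G^{+_k}\T is a tree, and the quotient group G/G^{+_k} acts properly and cocompactly on this tree (hence is virtually free). -/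
open SimpleGraph

/-- The orbit equivalence relation on the vertices of a graph `G` induced by a subgroup
`H` of `Aut(G)`. -/
def orbitSetoid {V : Type*} (G : SimpleGraph V) (H : Subgroup (G ≃g G)) : Setoid V where
  r a b := ∃ g ∈ H, g a = b
  iseqv := by
    constructor
    · exact fun a => ⟨1, H.one_mem, rfl⟩
    · rintro a b ⟨g, hg, rfl⟩
      exact ⟨g⁻¹, H.inv_mem hg, g.inv_apply_self a⟩
    · rintro a b c ⟨g, hg, rfl⟩ ⟨g', hg', rfl⟩
      exact ⟨g' * g, H.mul_mem hg' hg, rfl⟩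

/-- The quotient graph `H \ G` of a graph `G` by a subgroup `H` of `Aut(G)`: vertices are
the `H`-orbits, two distinct orbits being adjacent whenever they contain adjacent
vertices. -/
def quotientGraph {V : Type*} (G : SimpleGraph V) (H : Subgroup (G ≃g G)) :
    SimpleGraph (Quotient (orbitSetoid G H)) where
  Adj q₁ q₂ := q₁ ≠ q₂ ∧ ∃ a b : V,
    Quotient.mk (orbitSetoid G H) a = q₁ ∧ Quotient.mk (orbitSetoid G H) b = q₂ ∧ G.Adj a b
  symm := by
    constructor
    rintro q₁ q₂ ⟨hne, a, b, ha, hb, hab⟩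
    exact ⟨hne.symm, b, a, hb, ha, hab.symm⟩
  loopless := ⟨fun q h => h.1 rfl⟩

/-- The set of elements of `Gg ≤ Aut(G)` fixing pointwise the ball of radius `k - 1`
around some edge of `G`. -/
def edgeBallFixators {V : Type*} (G : SimpleGraph V) (Gg : Subgroup (G ≃g G)) (k : ℕ) :
    Set (G ≃g G) :=
  {g | g ∈ Gg ∧ ∃ x y : V, G.Adj x y ∧
    ∀ z : V, (G.dist x z ≤ k - 1 ∨ G.dist y z ≤ k - 1) → g z = z}

/-- The subgroup `Gg^{+_k}` generated by the pointwise stabilizers of `(k-1)`-balls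
around edges of the graph. -/
def gplus {V : Type*} (G : SimpleGraph V) (Gg : Subgroup (G ≃g G)) (k : ℕ) :
    Subgroup (G ≃g G) :=
  Subgroup.closure (edgeBallFixators G Gg k)


section Aux19
open scoped Classical

variable {V : Type*} {G : SimpleGraph V}

private lemma discrete_of_finite19 [Finite V] (G : SimpleGraph V) :
    DiscreteTopology (G ≃g G) := by
  rw [discreteTopology_iff_isOpen_singleton]
  intro g
  letI : TopologicalSpace V := ⊥
  haveI : DiscreteTopology V := ⟨rfl⟩
  refine isOpen_induced_iff.mpr ⟨{(g : V → V)}, isOpen_discrete _, ?_⟩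
  ext h
  simp only [Set.mem_preimage, Set.mem_singleton_iff]
  exact ⟨fun hh => DFunLike.coe_injective hh, fun hh => by rw [hh]⟩

private lemma autDist19 (hconn : G.Connected) (g : G ≃g G) (a b : V) :
    G.dist (g a) (g b) = G.dist a b := by
  have key : ∀ (g : G ≃g G) (a b : V), G.dist (g a) (g b) ≤ G.dist a b := by
    intro g a b
    obtain ⟨p, hp⟩ := (hconn.preconnected a b).exists_walk_length_eq_dist
    calc G.dist (g a) (g b) ≤ (p.map (SimpleGraph.Iso.toHom g)).length :=
          SimpleGraph.dist_le _
      _ = G.dist a b := by rw [SimpleGraph.Walk.length_map, hp]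
  refine le_antisymm (key g a b) ?_
  have h2 := key g.symm (g a) (g b)
  simpa using h2

private lemma ballFin19 (hconn : G.Connected) (hlf : ∀ v : V, (G.neighborSet v).Finite)
    (r : ℕ) (x : V) : {z : V | G.dist x z ≤ r}.Finite := by
  induction r with
  | zero =>
    refine Set.Finite.subset (Set.finite_singleton x) ?_
    intro z hz
    simp only [Set.mem_setOf_eq, Nat.le_zero] at hz
    have := (hconn.dist_eq_zero_iff).mp hz
    simp [← this]
  | succ r ih =>
    refine Set.Finite.subset (ih.union (ih.biUnion (fun w _ => hlf w))) ?_
    intro z hz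
    simp only [Set.mem_setOf_eq] at hz
    by_cases hzr : G.dist x z ≤ r
    · exact Or.inl hzr
    · have hdz : G.dist z x = r + 1 := by rw [SimpleGraph.dist_comm]; omega
      obtain ⟨p, hp⟩ := (hconn.preconnected z x).exists_walk_length_eq_dist
      cases p with
      | nil => rw [hdz] at hp; simp at hp
      | @cons _ m _ h q =>
        right
        have hq : G.dist m x ≤ q.length := SimpleGraph.dist_le q
        have hlen : q.length = r := by
          rw [hdz] at hp; simp [SimpleGraph.Walk.length_cons] at hp; omega
        have hmx : G.dist x m ≤ r := by rw [SimpleGraph.dist_comm]; omega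
        exact Set.mem_biUnion hmx h.symm

/-- The unique path between two vertices. -/
private noncomputable def thePath19 (hconn : G.Connected) (a b : V) : G.Path a b :=
  (hconn.preconnected a b).some.toPath

private lemma thePath19_eq (hconn : G.Connected) (hac : G.IsAcyclic) {a b : V}
    (p : G.Walk a b) (hp : p.IsPath) : (thePath19 hconn a b : G.Walk a b) = p :=
  congrArg Subtype.val (hac.path_unique (thePath19 hconn a b) ⟨p, hp⟩)

/-- Parity of the number of edges of a list lying in `E'`. -/
private noncomputable def wtE19 (E' : Set (Sym2 V)) (l : List (Sym2 V)) : ZMod 2 :=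
  (l.countP (fun e => decide (e ∈ E')) : ℕ)

private lemma wtE19_nil (E' : Set (Sym2 V)) : wtE19 E' ([] : List (Sym2 V)) = 0 := by
  simp [wtE19]

private lemma wtE19_cons (E' : Set (Sym2 V)) (e : Sym2 V) (l : List (Sym2 V)) :
    wtE19 E' (e :: l) = (if e ∈ E' then 1 else 0) + wtE19 E' l := by
  simp only [wtE19, List.countP_cons]
  by_cases he : e ∈ E' <;> simp [he] <;> push_cast <;> ring

private lemma wtE19_map (E' : Set (Sym2 V)) (f : V → V)
    (hE : ∀ e, Sym2.map f e ∈ E' ↔ e ∈ E') (l : List (Sym2 V)) :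
    wtE19 E' (l.map (Sym2.map f)) = wtE19 E' l := by
  induction l with
  | nil => simp
  | cons e l ih => simp [List.map_cons, wtE19_cons, ih, hE e]

/-- Parity of the number of `E'`-edges on the path from `a` to `b`. -/
private noncomputable def ccE19 (hconn : G.Connected) (E' : Set (Sym2 V)) (a b : V) :
    ZMod 2 :=
  wtE19 E' ((thePath19 hconn a b : G.Walk a b).edges)

private lemma ccE19_self (hconn : G.Connected) (hac : G.IsAcyclic) (E' : Set (Sym2 V))
    (a : V) : ccE19 hconn E' a a = 0 := by
  rw [ccE19, thePath19_eq hconn hac SimpleGraph.Walk.nil SimpleGraph.Walk.IsPath.nil]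
  simp [wtE19]

private lemma ccE19_step (hconn : G.Connected) (hac : G.IsAcyclic) (E' : Set (Sym2 V))
    {a b : V} (h : G.Adj a b) (d : V) :
    ccE19 hconn E' a d = (if s(a, b) ∈ E' then 1 else 0) + ccE19 hconn E' b d := by
  have htt : ∀ t : ZMod 2, t + t = 0 := by decide
  by_cases ha : a ∈ (thePath19 hconn b d : G.Walk b d).support
  · have hsplit := ((thePath19 hconn b d : G.Walk b d).take_spec ha)
    have htake : ((thePath19 hconn b d : G.Walk b d).takeUntil a ha).IsPath :=
      (thePath19 hconn b d).2.takeUntil ha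
    have hdrop : ((thePath19 hconn b d : G.Walk b d).dropUntil a ha).IsPath :=
      (thePath19 hconn b d).2.dropUntil ha
    have hsingle : ((thePath19 hconn b d : G.Walk b d).takeUntil a ha)
        = SimpleGraph.Walk.cons h.symm SimpleGraph.Walk.nil :=
      congrArg Subtype.val (hac.path_unique ⟨_, htake⟩ (SimpleGraph.Path.singleton h.symm))
    have hdropEq : ((thePath19 hconn b d : G.Walk b d).dropUntil a ha)
        = (thePath19 hconn a d : G.Walk a d) := (thePath19_eq hconn hac _ hdrop).symm
    have hbd : ccE19 hconn E' b d = (if s(a, b) ∈ E' then 1 else 0) + ccE19 hconn E' a d := by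
      rw [ccE19, ← hsplit, SimpleGraph.Walk.edges_append, hsingle, hdropEq]
      rw [SimpleGraph.Walk.edges_cons, SimpleGraph.Walk.edges_nil]
      rw [List.singleton_append, wtE19_cons, Sym2.eq_swap]
      rfl
    rw [hbd, ← add_assoc, htt, zero_add]
  · have hcons : (SimpleGraph.Walk.cons h (thePath19 hconn b d : G.Walk b d)).IsPath :=
      (thePath19 hconn b d).2.cons ha
    rw [ccE19, thePath19_eq hconn hac _ hcons, SimpleGraph.Walk.edges_cons, wtE19_cons]
    rfl

private lemma ccE19_adj (hconn : G.Connected) (hac : G.IsAcyclic) (E' : Set (Sym2 V))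
    {a b : V} (h : G.Adj a b) :
    ccE19 hconn E' a b = (if s(a, b) ∈ E' then 1 else 0) := by
  rw [ccE19_step hconn hac E' h b, ccE19_self hconn hac E' b, add_zero]

private lemma ccE19_walk (hconn : G.Connected) (hac : G.IsAcyclic) (E' : Set (Sym2 V))
    {a b : V} (w : G.Walk a b) (d : V) :
    ccE19 hconn E' a d = wtE19 E' w.edges + ccE19 hconn E' b d := by
  induction w with
  | nil => simp [wtE19_nil]
  | cons h q ih =>
    rw [SimpleGraph.Walk.edges_cons, wtE19_cons, ccE19_step hconn hac E' h d, ih, add_assoc]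

private lemma ccE19_tri (hconn : G.Connected) (hac : G.IsAcyclic) (E' : Set (Sym2 V))
    (a b d : V) : ccE19 hconn E' a d = ccE19 hconn E' a b + ccE19 hconn E' b d :=
  ccE19_walk hconn hac E' (thePath19 hconn a b : G.Walk a b) d

private lemma ccE19_map (hconn : G.Connected) (hac : G.IsAcyclic) (E' : Set (Sym2 V))
    (g : G ≃g G) (hE : ∀ e, Sym2.map (g : V → V) e ∈ E' ↔ e ∈ E') (a b : V) :
    ccE19 hconn E' (g a) (g b) = ccE19 hconn E' a b := by
  have hp : (((thePath19 hconn a b : G.Walk a b)).map (SimpleGraph.Iso.toHom g)).IsPath :=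
    SimpleGraph.Walk.map_isPath_of_injective g.injective (thePath19 hconn a b).2
  have h1 : (thePath19 hconn (g a) (g b) : G.Walk (g a) (g b))
      = ((thePath19 hconn a b : G.Walk a b)).map (SimpleGraph.Iso.toHom g) :=
    thePath19_eq hconn hac _ hp
  rw [ccE19, h1, SimpleGraph.Walk.edges_map]
  exact wtE19_map E' _ hE _

end Aux19

/-- Let `T` be a locally finite tree, `k ≥ 0`, and `Gg` a closed subgroup of
`Aut(T)` equal to its own `k`-closure, acting cocompactly on `T`, non-discrete, preserving
no proper nonempty subtree and fixing no end of `T`.  Let `Gg^{+_k}` be the subgroup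
generated by the pointwise stabilizers of balls of radius `k − 1` around edges of `T`.
Then `Gg^{+_k}` is an open normal subgroup of `Gg`, the quotient graph `Gg^{+_k} \ T` is
a tree, and the quotient group `Gg / Gg^{+_k}` acts properly (finite vertex stabilizers)
and cocompactly on this tree (hence is virtually free). -/
theorem stmt_19 {V : Type*} (G : SimpleGraph V)
    (hlf : ∀ v : V, (G.neighborSet v).Finite) (hconn : G.Connected) (hac : G.IsAcyclic)
    (k : ℕ) (Gg : Subgroup (G ≃g G)) (hGgclosed : IsClosed (Gg : Set (G ≃g G)))
    (hkclosed : (Gg : Set (G ≃g G)) = kClosure G Gg k)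
    (hcc : CocompactOn G Gg)
    (hnondisc : ¬ DiscreteTopology ↥Gg)
    (hnosubtree : ¬ ∃ S : Set V, S.Nonempty ∧ S ≠ Set.univ ∧ (G.induce S).Connected ∧
      ∀ g ∈ Gg, ∀ v ∈ S, g v ∈ S)
    (hnoend : ¬ ∃ b : ℕ → V, (∀ n : ℕ, G.Adj (b n) (b (n + 1))) ∧ Function.Injective b ∧
      ∀ g ∈ Gg, Set.Infinite (Set.range (fun n => g (b n)) ∩ Set.range b)) :
    gplus G Gg k ≤ Gg ∧
    (∃ O : Set (G ≃g G), IsOpen O ∧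
      (gplus G Gg k : Set (G ≃g G)) = (Gg : Set (G ≃g G)) ∩ O) ∧
    (∀ g ∈ Gg, ∀ x ∈ gplus G Gg k, g * x * g⁻¹ ∈ gplus G Gg k) ∧
    (quotientGraph G (gplus G Gg k)).IsTree ∧
    (∀ v : V, ∃ F : Finset (G ≃g G), ∀ g ∈ Gg,
      (∃ h ∈ gplus G Gg k, h (g v) = v) → ∃ f ∈ F, f⁻¹ * g ∈ gplus G Gg k) ∧
    (∃ s : Finset V, ∀ v : V, ∃ g ∈ Gg, g v ∈ s) := by
    classical
  cases finite_or_infinite V with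
  | inl hfin =>
    exact absurd (by haveI := hfin; haveI := discrete_of_finite19 G; infer_instance) hnondisc
  | inr hinf =>
  haveI := hinf
  -- (1) gplus ≤ Gg
  have hNle : gplus G Gg k ≤ Gg := (Subgroup.closure_le Gg).mpr (fun s hs => hs.1)
  -- basic group computation helpers
  have happinv : ∀ (g : G ≃g G) (z : V), g (g⁻¹ z) = z := by
    intro g z
    have h2 : (g * g⁻¹) z = z := by rw [mul_inv_cancel]; rfl
    rwa [RelIso.mul_apply] at h2
  have happinv' : ∀ (g : G ≃g G) (z : V), g⁻¹ (g z) = z := by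
    intro g z
    have h2 : (g⁻¹ * g) z = z := by rw [inv_mul_cancel]; rfl
    rwa [RelIso.mul_apply] at h2
  -- conjugation of generators
  have hgen : ∀ g ∈ Gg, ∀ s ∈ edgeBallFixators G Gg k,
      g * s * g⁻¹ ∈ edgeBallFixators G Gg k := by
    rintro g hg s ⟨hsGg, x, y, hxy, hfix⟩
    refine ⟨Gg.mul_mem (Gg.mul_mem hg hsGg) (Gg.inv_mem hg), g x, g y,
      g.map_rel_iff.mpr hxy, ?_⟩
    intro z hz
    have h1 : G.dist (g x) z = G.dist x (g⁻¹ z) := by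
      conv_lhs => rw [← happinv g z]
      exact autDist19 hconn g x (g⁻¹ z)
    have h2 : G.dist (g y) z = G.dist y (g⁻¹ z) := by
      conv_lhs => rw [← happinv g z]
      exact autDist19 hconn g y (g⁻¹ z)
    have hz' : G.dist x (g⁻¹ z) ≤ k - 1 ∨ G.dist y (g⁻¹ z) ≤ k - 1 := by
      rcases hz with h | h
      · exact Or.inl (h1 ▸ h)
      · exact Or.inr (h2 ▸ h)
    calc (g * s * g⁻¹) z = g (s (g⁻¹ z)) := by rw [RelIso.mul_apply, RelIso.mul_apply]
      _ = g (g⁻¹ z) := by rw [hfix _ hz']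
      _ = z := happinv g z
  -- (3) normality
  have hnorm : ∀ g ∈ Gg, ∀ x ∈ gplus G Gg k, g * x * g⁻¹ ∈ gplus G Gg k := by
    intro g hg x hx
    induction hx using Subgroup.closure_induction with
    | mem y hy => exact Subgroup.subset_closure (hgen g hg y hy)
    | one =>
      have h1 : g * 1 * g⁻¹ = 1 := by group
      rw [h1]; exact one_mem _
    | mul a b ha hb iha ihb =>
      have h1 : g * (a * b) * g⁻¹ = (g * a * g⁻¹) * (g * b * g⁻¹) := by group
      rw [h1]; exact mul_mem iha ihb
    | inv a ha iha =>
      have h1 : g * a⁻¹ * g⁻¹ = (g * a * g⁻¹)⁻¹ := by group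
      rw [h1]; exact inv_mem iha
  -- an edge of G
  obtain ⟨a0, b0, hab0⟩ := exists_pair_ne V
  obtain ⟨x0, y0, hxy0⟩ : ∃ x y : V, G.Adj x y := by
    obtain ⟨p⟩ := hconn.preconnected a0 b0
    cases p with
    | nil => exact absurd rfl hab0
    | cons h q => exact ⟨_, _, h⟩
  set Bset : Set V := {z | G.dist x0 z ≤ k - 1 ∨ G.dist y0 z ≤ k - 1} with hBset
  have hBfin : Bset.Finite := by
    refine Set.Finite.subset
      ((ballFin19 hconn hlf (k - 1) x0).union (ballFin19 hconn hlf (k - 1) y0)) ?_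
    rintro z (h | h)
    · exact Or.inl h
    · exact Or.inr h
  have hfixmem : ∀ w : G ≃g G, w ∈ Gg → (∀ z ∈ Bset, w z = z) → w ∈ gplus G Gg k :=
    fun w hw hfz => Subgroup.subset_closure ⟨hw, x0, y0, hxy0, fun z hz => hfz z hz⟩
  -- (2) openness
  have hopen : ∃ O : Set (G ≃g G), IsOpen O ∧
      (gplus G Gg k : Set (G ≃g G)) = (Gg : Set (G ≃g G)) ∩ O := by
    refine ⟨⋃ h ∈ (gplus G Gg k : Set (G ≃g G)), {g | ∀ z ∈ Bset, g z = h z}, ?_, ?_⟩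
    · refine isOpen_biUnion fun h _ => ?_
      letI : TopologicalSpace V := ⊥
      haveI : DiscreteTopology V := ⟨rfl⟩
      refine isOpen_induced_iff.mpr
        ⟨⋂ z ∈ Bset, (fun f : V → V => f z) ⁻¹' {h z}, ?_, ?_⟩
      · exact hBfin.isOpen_biInter fun z _ =>
          (isOpen_discrete _).preimage (continuous_apply z)
      · ext g; simp
    · ext g
      simp only [Set.mem_inter_iff, Set.mem_iUnion, SetLike.mem_coe, Set.mem_setOf_eq]
      constructor
      · intro hg
        exact ⟨hNle hg, g, hg, fun z _ => rfl⟩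
      · rintro ⟨hgGg, h, hhN, hagree⟩
        have h1 : h⁻¹ * g ∈ gplus G Gg k := by
          refine hfixmem _ (Gg.mul_mem (Gg.inv_mem (hNle hhN)) hgGg) ?_
          intro z hz
          rw [RelIso.mul_apply, hagree z hz, happinv']
        have h2 : g = h * (h⁻¹ * g) := by group
        rw [h2]; exact mul_mem hhN h1
  -- quotient reachability
  have hqreach : ∀ {u w : V} (q : G.Walk u w),
      (quotientGraph G (gplus G Gg k)).Reachable
        (Quotient.mk (orbitSetoid G (gplus G Gg k)) u)
        (Quotient.mk (orbitSetoid G (gplus G Gg k)) w) := by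
    intro u w q
    induction q with
    | nil => exact SimpleGraph.Reachable.refl _
    | @cons u m w h q ih =>
      by_cases hm : Quotient.mk (orbitSetoid G (gplus G Gg k)) u
          = Quotient.mk (orbitSetoid G (gplus G Gg k)) m
      · rw [hm]; exact ih
      · have hadjq : (quotientGraph G (gplus G Gg k)).Adj
            (Quotient.mk (orbitSetoid G (gplus G Gg k)) u)
            (Quotient.mk (orbitSetoid G (gplus G Gg k)) m) := ⟨hm, u, m, rfl, rfl, h⟩
        exact hadjq.reachable.trans ih
  have hConn : (quotientGraph G (gplus G Gg k)).Connected := by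
    rw [SimpleGraph.connected_iff]
    constructor
    · intro q1 q2
      refine Quotient.inductionOn₂ q1 q2 fun a b => ?_
      exact (hconn.preconnected a b).elim fun w => hqreach w
    · obtain ⟨v⟩ := hconn.nonempty
      exact ⟨Quotient.mk _ v⟩
  -- (4) acyclicity of the quotient
  have hAcyc : (quotientGraph G (gplus G Gg k)).IsAcyclic := by
    intro q c hcyc
    cases c with
    | nil => exact hcyc.ne_nil rfl
    | @cons _ q1 _ hadj W =>
      obtain ⟨hneq, xe, ye, hxe, hye, hadjxy⟩ := hadj
      set E' : Set (Sym2 V) :=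
        (fun gg : G ≃g G => Sym2.map gg s(xe, ye)) '' (gplus G Gg k : Set (G ≃g G)) with hE'
      have hEfwd : ∀ gg ∈ gplus G Gg k, ∀ e ∈ E', Sym2.map (gg : V → V) e ∈ E' := by
        rintro gg hgg e ⟨h0, hh0, rfl⟩
        refine ⟨gg * h0, mul_mem hgg hh0, ?_⟩
        rw [Sym2.map_map]
        rfl
      have hEinv : ∀ gg ∈ gplus G Gg k, ∀ e, Sym2.map (gg : V → V) e ∈ E' ↔ e ∈ E' := by
        intro gg hgg e
        constructor
        · intro h
          have h2 := hEfwd gg⁻¹ (inv_mem hgg) _ h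
          have h3 : (⇑(gg⁻¹) ∘ ⇑gg) = id := funext fun z => happinv' gg z
          rwa [Sym2.map_map, h3, Sym2.map_id, id_eq] at h2
        · exact hEfwd gg hgg e
      have hsig : ∀ gg ∈ gplus G Gg k, ∀ u : V,
          ccE19 hconn E' xe (gg u) = ccE19 hconn E' xe u := by
        intro gg hgg
        induction hgg using Subgroup.closure_induction with
        | mem s hs =>
          intro u
          obtain ⟨hsGg, xs, ys, hadjs, hfixs⟩ := hs
          have hfxs : s xs = xs :=
            hfixs xs (Or.inl (by simp [SimpleGraph.dist_self]))
          have hmap := ccE19_map hconn hac E' s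
            (hEinv s (Subgroup.subset_closure ⟨hsGg, xs, ys, hadjs, hfixs⟩)) xs u
          rw [hfxs] at hmap
          rw [ccE19_tri hconn hac E' xe xs (s u), hmap,
            ← ccE19_tri hconn hac E' xe xs u]
        | one => intro u; rfl
        | mul a b ha hb iha ihb =>
          intro u
          rw [RelIso.mul_apply, iha, ihb]
        | inv a ha iha =>
          intro u
          have h2 := iha (a⁻¹ u)
          rw [happinv a u] at h2
          exact h2.symm
      have hdesc : ∀ a b : V,
          Quotient.mk (orbitSetoid G (gplus G Gg k)) a
            = Quotient.mk (orbitSetoid G (gplus G Gg k)) b →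
          ccE19 hconn E' xe a = ccE19 hconn E' xe b := by
        intro a b hab
        obtain ⟨gg, hgg, hgab⟩ := Quotient.exact hab
        rw [← hgab]
        exact (hsig gg hgg a).symm
      have claim : ∀ {p1 p2} (W' : (quotientGraph G (gplus G Gg k)).Walk p1 p2),
          s(q, q1) ∉ W'.edges → ∀ a b : V,
          Quotient.mk (orbitSetoid G (gplus G Gg k)) a = p1 →
          Quotient.mk (orbitSetoid G (gplus G Gg k)) b = p2 →
          ccE19 hconn E' xe a = ccE19 hconn E' xe b := by
        intro p1 p2 W'
        induction W' with
        | nil =>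
          intro _ a b ha hb
          exact hdesc a b (ha.trans hb.symm)
        | @cons p1 pm p2 hadj' W'' ih =>
          intro hne a b ha hb
          rw [SimpleGraph.Walk.edges_cons, List.mem_cons] at hne
          push_neg at hne
          obtain ⟨hne1, hne2⟩ := hne
          obtain ⟨hpq, a', b', ha', hb', hab'⟩ := hadj'
          have hcc0 : ccE19 hconn E' a' b' = 0 := by
            rw [ccE19_adj hconn hac E' hab', if_neg ?_]
            intro hmem
            obtain ⟨gg, hgg, hgge0⟩ := hmem
            have hgge : Sym2.map (gg : V → V) s(xe, ye) = s(a', b') := hgge0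
            rw [Sym2.map_pair_eq] at hgge
            rcases Sym2.eq_iff.mp hgge with ⟨h1, h2⟩ | ⟨h1, h2⟩
            · have e1 : Quotient.mk (orbitSetoid G (gplus G Gg k)) a' = q := by
                rw [← h1, ← hxe]
                exact (Quotient.sound (show ∃ g ∈ gplus G Gg k, g xe = gg xe from
                  ⟨gg, hgg, rfl⟩)).symm
              have e2 : Quotient.mk (orbitSetoid G (gplus G Gg k)) b' = q1 := by
                rw [← h2, ← hye]
                exact (Quotient.sound (show ∃ g ∈ gplus G Gg k, g ye = gg ye from
                  ⟨gg, hgg, rfl⟩)).symm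
              exact hne1 (by rw [← ha', ← hb', e1, e2])
            · have e1 : Quotient.mk (orbitSetoid G (gplus G Gg k)) a' = q1 := by
                rw [← h2, ← hye]
                exact (Quotient.sound (show ∃ g ∈ gplus G Gg k, g ye = gg ye from
                  ⟨gg, hgg, rfl⟩)).symm
              have e2 : Quotient.mk (orbitSetoid G (gplus G Gg k)) b' = q := by
                rw [← h1, ← hxe]
                exact (Quotient.sound (show ∃ g ∈ gplus G Gg k, g xe = gg xe from
                  ⟨gg, hgg, rfl⟩)).symm
              exact hne1 (by rw [← ha', ← hb', e1, e2, Sym2.eq_swap])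
          have step1 : ccE19 hconn E' xe a = ccE19 hconn E' xe a' :=
            hdesc a a' (ha.trans ha'.symm)
          have step2 : ccE19 hconn E' xe a' = ccE19 hconn E' xe b' := by
            rw [ccE19_tri hconn hac E' xe a' b', hcc0, add_zero]
          exact (step1.trans step2).trans (ih hne2 b' b hb' hb)
      have hW : s(q, q1) ∉ W.edges := by
        have hnodup := hcyc.edges_nodup
        replace hnodup := List.nodup_cons.mp (show (s(q, q1) :: W.edges).Nodup from hnodup)
        exact hnodup.1
      have hfinal := claim W hW ye xe hye hxe
      rw [ccE19_self hconn hac E' xe, ccE19_adj hconn hac E' hadjxy,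
        if_pos ⟨1, one_mem _, by simp [RelIso.coe_one]⟩] at hfinal
      exact absurd hfinal (by decide)
  -- (5) properness
  have hproper : ∀ v : V, ∃ F : Finset (G ≃g G), ∀ g ∈ Gg,
      (∃ h ∈ gplus G Gg k, h (g v) = v) → ∃ f ∈ F, f⁻¹ * g ∈ gplus G Gg k := by
    intro v
    haveI := hBfin.to_subtype
    set R : ℕ := G.dist v x0 + G.dist v y0 + k with hR
    have hball : {w : V | G.dist v w ≤ R}.Finite := ballFin19 hconn hlf R v
    set A : Set (G ≃g G) := {g | g ∈ Gg ∧ g v = v} with hA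
    set ρ : (G ≃g G) → (Bset → V) := fun g z => g z.1 with hρ
    have hrange : ∀ g ∈ A, ∀ z : Bset, ρ g z ∈ {w : V | G.dist v w ≤ R} := by
      rintro g ⟨hgGg, hgv⟩ z
      have h1 : G.dist v (g z.1) = G.dist v z.1 := by
        conv_lhs => rw [← hgv]
        exact autDist19 hconn g v z.1
      simp only [hρ, Set.mem_setOf_eq, h1]
      rcases z.2 with h | h
      · have h3 := hconn.dist_triangle (u := v) (v := x0) (w := z.1)
        omega
      · have h3 := hconn.dist_triangle (u := v) (v := y0) (w := z.1)
        omega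
    have hΦfin : (ρ '' A).Finite := by
      refine Set.Finite.subset (Set.Finite.pi fun _ : Bset => hball) ?_
      rintro f ⟨g, hg, rfl⟩
      exact Set.mem_univ_pi.mpr fun z => hrange g hg z
    set sel : (Bset → V) → (G ≃g G) :=
      fun φ => if h : ∃ g ∈ A, ρ g = φ then h.choose else 1 with hsel
    refine ⟨(hΦfin.image sel).toFinset, ?_⟩
    rintro g hg ⟨h, hh, hhv⟩
    have hg' : (h * g) ∈ A := ⟨Gg.mul_mem (hNle hh) hg, by rw [RelIso.mul_apply, hhv]⟩
    have hex : ∃ g0 ∈ A, ρ g0 = ρ (h * g) := ⟨h * g, hg', rfl⟩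
    have hfspec : sel (ρ (h * g)) ∈ A ∧ ρ (sel (ρ (h * g))) = ρ (h * g) := by
      simp only [hsel]
      rw [dif_pos hex]
      exact ⟨hex.choose_spec.1, hex.choose_spec.2⟩
    refine ⟨sel (ρ (h * g)), ?_, ?_⟩
    · rw [Set.Finite.mem_toFinset]
      exact ⟨ρ (h * g), ⟨h * g, hg', rfl⟩, rfl⟩
    · have hfix' : ∀ z ∈ Bset, ((sel (ρ (h * g)))⁻¹ * (h * g)) z = z := by
        intro z hz
        have h4 : sel (ρ (h * g)) z = (h * g) z := congrFun hfspec.2 ⟨z, hz⟩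
        rw [RelIso.mul_apply, ← h4, happinv']
      have h1 : (sel (ρ (h * g)))⁻¹ * (h * g) ∈ gplus G Gg k :=
        hfixmem _ (Gg.mul_mem (Gg.inv_mem hfspec.1.1)
          (Gg.mul_mem (hNle hh) hg)) hfix'
      have h2 : g⁻¹ * h⁻¹ * g ∈ gplus G Gg k := by
        have h3 := hnorm g⁻¹ (Gg.inv_mem hg) h⁻¹ (inv_mem hh)
        rwa [inv_inv] at h3
      have key : (sel (ρ (h * g)))⁻¹ * g
          = ((sel (ρ (h * g)))⁻¹ * (h * g)) * (g⁻¹ * h⁻¹ * g) := by group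
      rw [key]
      exact mul_mem h1 h2
  exact ⟨hNle, hopen, hnorm, ⟨hConn, hAcyc⟩, hproper, hcc⟩
end
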